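/- No sequence has all prefixes incompressible: there exists a constant c such that for every infinite binary sequence χ : ℕ → Bool there are infinitely many n with K(χ↾n) ≤ n − log₂ n + c, where χ↾n denotes the binary string of the first n bits of χ. -/

import Mathlib

/-- Plain Kolmogorov complexity of `x` with respect to decompressor `D`. -/
noncomputable def Kc (D : List Bool →. List Bool) (x : List Bool) : ℕ∞ :=
  sInf {n : ℕ∞ | ∃ p : List Bool, x ∈ D p ∧ (p.length : ℕ∞) = n}

/-- `U` is an optimal decompressor. -/
def OptimalDecompressor (U : List Bool →. List Bool) : Prop :=
  Partrec U ∧ ∀ D : List Bool →. List Bool, Partrec D →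
    ∃ c : ℕ, ∀ x : List Bool, Kc U x ≤ Kc D x + (c : ℕ∞)

/-!
Let `s` be the first `m` bits of `χ` and `n` the index of `s` in an enumeration of binary
strings by length, so that `2 ^ m ≤ n + 1 < 2 ^ (m + 1)`. Then `χ↾n = s ++ q` with
`|q| = n - m`, and a fixed decompressor recovers `χ↾n` from `q` and one extra bit: `m` is either
`log₂ (|q| + 1)` or one more, the bit says which, and then `n = |q| + m` determines `s`.
So `K(χ↾n) ≤ n - m + O(1)` while `log₂ n ≤ m`.
-/

/-- Bijective base-2 numeration (digits `1 + b`, least significant first). It enumerates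
`List Bool` by length: the strings of length `l` get the indices `2 ^ l - 1, …, 2 ^ (l + 1) - 2`. -/
def bijToNat : List Bool → ℕ :=
  List.foldr (fun b n => 2 * n + 1 + b.toNat) 0

def bijSucc : List Bool → List Bool
  | [] => [false]
  | false :: s => true :: s
  | true :: s => false :: bijSucc s

def bijOfNat (k : ℕ) : List Bool :=
  bijSucc^[k] []

@[simp] lemma bijToNat_nil : bijToNat [] = 0 := rfl

@[simp] lemma bijToNat_cons (b : Bool) (s : List Bool) :
    bijToNat (b :: s) = 2 * bijToNat s + 1 + b.toNat := rfl

lemma bijToNat_bijSucc (s : List Bool) : bijToNat (bijSucc s) = bijToNat s + 1 := by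
  induction s with
  | nil => rfl
  | cons b s ih => cases b <;> simp [bijSucc, ih]; ring

lemma bijToNat_bijOfNat (k : ℕ) : bijToNat (bijOfNat k) = k := by
  induction k with
  | zero => rfl
  | succ k ih => rw [bijOfNat, Function.iterate_succ_apply', bijToNat_bijSucc, ← bijOfNat, ih]

lemma bijToNat_injective : Function.Injective bijToNat := by
  intro s
  induction s with
  | nil =>
    rintro (_ | ⟨b, t⟩) h
    · rfl
    · simp at h; omega
  | cons a s ih =>
    rintro (_ | ⟨b, t⟩) h
    · simp at h
    · have hab : a = b := by cases a <;> cases b <;> simp at h ⊢ <;> omega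
      subst hab
      rw [ih (by simp at h; omega)]

lemma bijOfNat_bijToNat (s : List Bool) : bijOfNat (bijToNat s) = s :=
  bijToNat_injective (bijToNat_bijOfNat _)

lemma log_bijToNat_succ (s : List Bool) : Nat.log 2 (bijToNat s + 1) = s.length := by
  rw [Nat.log_eq_iff (by simp)]
  induction s with
  | nil => simp
  | cons b s ih => cases b <;> simp [pow_succ] <;> omega

lemma length_bijOfNat (k : ℕ) : (bijOfNat k).length = Nat.log 2 (k + 1) := by
  rw [← log_bijToNat_succ, bijToNat_bijOfNat]

lemma primrec_bijSucc : Primrec bijSucc := by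
  have hstep : Primrec₂ fun (_ : List Bool) (p : Bool × List Bool × List Bool) =>
      cond p.1 (false :: p.2.2) (true :: p.2.1) :=
    (Primrec.cond (Primrec.fst.comp Primrec.snd)
      (Primrec.list_cons.comp (Primrec.const false)
        (Primrec.snd.comp (Primrec.snd.comp Primrec.snd)))
      (Primrec.list_cons.comp (Primrec.const true)
        (Primrec.fst.comp (Primrec.snd.comp Primrec.snd)))).to₂
  refine (Primrec.list_rec Primrec.id (Primrec.const [false]) hstep).of_eq fun s => ?_
  induction s with
  | nil => rfl
  | cons b s ih => cases b <;> simp [bijSucc, ← ih]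

lemma primrec_bijOfNat : Primrec bijOfNat :=
  Primrec.nat_iterate Primrec.id (Primrec.const []) (primrec_bijSucc.comp Primrec.snd).to₂

lemma exists_log_sub_add_eq {N l : ℕ} (h : Nat.log 2 (N + 1) = l) :
    ∃ b : Bool, Nat.log 2 (N - l + 1) + b.toNat = l := by
  have hlow : 2 ^ l ≤ N + 1 := h ▸ Nat.pow_log_le_self 2 N.succ_ne_zero
  have hupp : N + 1 < 2 ^ (l + 1) := h ▸ Nat.lt_pow_succ_log_self one_lt_two _
  have hl : l - 1 < 2 ^ (l - 1) := Nat.lt_two_pow_self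
  have hlog_le : Nat.log 2 (N - l + 1) ≤ l :=
    Nat.lt_succ_iff.mp (Nat.log_lt_of_lt_pow (by omega) (by omega))
  have hle_log : l - 1 ≤ Nat.log 2 (N - l + 1) := by
    refine Nat.le_log_of_pow_le one_lt_two ?_
    rcases l with _ | l
    · simp
    · rw [pow_succ] at hlow; simp at hl ⊢; omega
  refine ⟨decide (Nat.log 2 (N - l + 1) < l), ?_⟩
  by_cases hlt : Nat.log 2 (N - l + 1) < l <;> simp [hlt] <;> omega

/-- `(bijOfNat q.length).length` stands for `log₂ (|q| + 1)` (`length_bijOfNat`), in a form that is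
visibly primitive recursive. -/
def decodeByLength : List Bool → List Bool
  | [] => []
  | b :: q => bijOfNat (q.length + (bijOfNat q.length).length + b.toNat) ++ q

lemma primrec_decodeByLength : Primrec decodeByLength := by
  have hq : Primrec fun x : List Bool × Bool × List Bool => x.2.2 :=
    Primrec.snd.comp Primrec.snd
  have hlen := Primrec.list_length.comp hq
  have hidx : Primrec fun x : List Bool × Bool × List Bool =>
      x.2.2.length + (bijOfNat x.2.2.length).length + x.2.1.toNat :=
    Primrec.nat_add.comp
      (Primrec.nat_add.comp hlen (Primrec.list_length.comp (primrec_bijOfNat.comp hlen)))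
      (Primrec.cond (Primrec.fst.comp Primrec.snd) (Primrec.const 1) (Primrec.const 0))
  refine (Primrec.list_casesOn Primrec.id (Primrec.const [])
    (Primrec.list_append.comp (primrec_bijOfNat.comp hidx) hq).to₂).of_eq fun p => ?_
  rcases p with _ | ⟨b, q⟩
  · rfl
  · cases b <;> rfl

lemma decodeByLength_cons {s q : List Bool} (h : s.length + q.length = bijToNat s) :
    ∃ b : Bool, decodeByLength (b :: q) = s ++ q := by
  obtain ⟨b, hb⟩ := exists_log_sub_add_eq (log_bijToNat_succ s)
  have hq : q.length = bijToNat s - s.length := by omega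
  have hidx : q.length + Nat.log 2 (q.length + 1) + b.toNat = bijToNat s := by
    rw [hq]; omega
  exact ⟨b, by rw [decodeByLength, length_bijOfNat, hidx, bijOfNat_bijToNat]⟩

lemma Kc_le_length {D : List Bool →. List Bool} {p x : List Bool} (h : x ∈ D p) :
    Kc D x ≤ p.length :=
  sInf_le ⟨p, h, rfl⟩

lemma Kc_decodeByLength_append_le {s q : List Bool} (h : s.length + q.length = bijToNat s) :
    Kc decodeByLength (s ++ q) ≤ q.length + 1 := by
  obtain ⟨b, hb⟩ := decodeByLength_cons h
  simpa using Kc_le_length (p := b :: q) (by rw [PFun.coe_val, hb]; exact Part.mem_some _)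

/-- No sequence has all prefixes incompressible: there is a constant `c` such
that every infinite binary sequence `χ` has infinitely many `n` with
`K(χ↾n) ≤ n − log₂ n + c` (stated additively as `K(χ↾n) + log₂ n ≤ n + c`,
which avoids truncated subtraction). -/
theorem infinitely_many_compressible_prefixes
    (U : List Bool →. List Bool) (hU : OptimalDecompressor U) :
    ∃ c : ℕ, ∀ χ : ℕ → Bool, ∀ m : ℕ, ∃ n : ℕ, m ≤ n ∧
      Kc U ((List.range n).map χ) + ((Nat.log 2 n : ℕ) : ℕ∞) ≤
        ((n + c : ℕ) : ℕ∞) := by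
  obtain ⟨c, hc⟩ := hU.2 _ primrec_decodeByLength.to_comp.partrec
  refine ⟨c + 1, fun χ m => ?_⟩
  set s := (List.range m).map χ
  set n := bijToNat s
  have hlog : Nat.log 2 (n + 1) = m := by simpa [s] using log_bijToNat_succ s
  have hmn : m ≤ n := by
    have hpow : 2 ^ m ≤ n + 1 := hlog ▸ Nat.pow_log_le_self 2 n.succ_ne_zero
    have : m < 2 ^ m := Nat.lt_two_pow_self
    omega
  refine ⟨n, hmn, ?_⟩
  set q := ((List.range n).map χ).drop m
  have hprefix : (List.range n).map χ = s ++ q := by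
    rw [← List.take_append_drop m ((List.range n).map χ), ← List.map_take, List.take_range,
      min_eq_left hmn]
  have hs : s.length = m := by simp [s]
  have hq : q.length = n - m := by simp [q]
  have hK : Kc U (s ++ q) ≤ ((n - m + 1 + c : ℕ) : ℕ∞) := by
    grw [hc, Kc_decodeByLength_append_le (by rw [hs, hq]; omega)]
    simp [hq]
  calc Kc U ((List.range n).map χ) + (Nat.log 2 n : ℕ∞)
      ≤ ((n - m + 1 + c : ℕ) : ℕ∞) + (m : ℕ∞) := by
        rw [hprefix]
        exact add_le_add hK (Nat.cast_le.mpr (hlog ▸ Nat.log_mono_right n.le_succ))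
    _ ≤ ((n + (c + 1) : ℕ) : ℕ∞) := by rw [← Nat.cast_add, Nat.cast_le]; omega
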